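/- Let $n\ge 2$ and $1\le k\le n$ be integers, $h\in\mathbb{R}$, $c<0$, and let $g:(a_1,a_2)\to\mathbb{R}$ be differentiable with $g(t)>\sqrt{-c}$, $g'(t)\ne 0$, and $(g'(t))^2 = c + g(t)^2 - g(t)^2\,(h+g(t)^{-n})^2$ for all $t$. Set $\lambda = h+g^{-n}$, $r = g/\sqrt{-c}$, fix $t_0\in(a_1,a_2)$ and let $\theta(t)=\int_{t_0}^t \frac{r(\tau)\lambda(\tau)}{r(\tau)^2-1}\,d\tau$. Let $B_2(s)\in\mathbb{R}^{n+2}$ have $\cos s$ in coordinate $n+1$, $\sin s$ in coordinate $n+2$ and $0$ elsewhere, and $B_3(s)$ have $-\sin s$ in coordinate $n+1$, $\cos s$ in coordinate $n+2$ and $0$ elsewhere. Then $(r')^2 + r^2\lambda^2 = r^2 - 1$ on $(a_1,a_2)$, and for every $y\in\mathbb{R}^{n+2}$ with $y_{n+1}=y_{n+2}=0$ and $\langle y,y\rangle = -1$, the curves $\phi(u) = r(u)\,y + \sqrt{r(u)^2-1}\,B_2(\theta(u))$ and $\nu(u) = -r(u)\lambda(u)\,y - \frac{r(u)^2\lambda(u)}{\sqrt{r(u)^2-1}}\,B_2(\theta(u))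 + \frac{r'(u)}{\sqrt{r(u)^2-1}}\,B_3(\theta(u))$ satisfy: $\langle\phi,\phi\rangle\equiv -1$, $\langle\phi',\phi'\rangle\equiv 1$, $\langle\nu,\nu\rangle\equiv 1$, $\langle\nu,\phi'\rangle\equiv 0$, $\langle\nu(u),v\rangle = 0$ for every $v\in\mathbb{R}^{n+2}$ with $v_{n+1}=v_{n+2}=0$ and $\langle v,y\rangle = 0$, and $\nu'(u) = -(nh-(n-1)\lambda(u))\,\phi'(u)$ for all $u$. -/

import Mathlib

/-!
In the frame `y, B₂(θ), B₃(θ)` (with `⟨y,y⟩ = -1`, rotating as `B₂' = θ' B₃`, `B₃' = -θ' B₂`)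
the curve `φ`, its velocity `φ' = r' y + (r r'/P) B₂ + (r λ/P) B₃` (where `P = √(r² - 1)`) and
`ν` have explicit coefficients, so the four identities for `⟨·,·⟩` are algebra modulo the
first-order equation `r'² = r² - 1 - r²λ²`.
For `ν' = -κ φ'` with `κ = nh - (n-1)λ` one uses `r λ' = (κ - λ) r'` and `r'' = r (1 - λκ)`,
the latter by differentiating the first-order equation. Since `g` is only assumed differentiable
once, `r''` exists because `r' = ±√(r² - 1 - r²λ²)` with a constant sign: `r'` never vanishes,
so by Darboux's theorem it does not change sign.
-/

/-- The semi-riemannian bilinear form of index `k` on `ℝ^m`: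
`⟨v,w⟩ = -v₁w₁ - ⋯ - v_k w_k + v_{k+1} w_{k+1} + ⋯ + v_m w_m`
(coordinates are 0-indexed in Lean, so the first `k` indices carry sign `-1`). -/
noncomputable def semiForm (k : ℕ) {m : ℕ} (v w : Fin m → ℝ) : ℝ :=
  ∑ i : Fin m, (if (i : ℕ) < k then (-1 : ℝ) else 1) * v i * w i

theorem hasDerivAt_lincomb_rotatingFrame {E : Type*} [NormedAddCommGroup E] [NormedSpace ℝ E]
    {y : E} {B₂ B₃ : ℝ → E} {a b c θ : ℝ → ℝ} {a' b' c' ω u : ℝ}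
    (hB₂ : HasDerivAt B₂ (B₃ (θ u)) (θ u)) (hB₃ : HasDerivAt B₃ (-B₂ (θ u)) (θ u))
    (ha : HasDerivAt a a' u) (hb : HasDerivAt b b' u) (hc : HasDerivAt c c' u)
    (hθ : HasDerivAt θ ω u) :
    HasDerivAt (fun t => a t • y + b t • B₂ (θ t) + c t • B₃ (θ t))
      (a' • y + (b' - c u * ω) • B₂ (θ u) + (c' + b u * ω) • B₃ (θ u)) u := by
  convert ((ha.smul_const y).add (hb.smul (hB₂.scomp u hθ))).add (hc.smul (hB₃.scomp u hθ))
    using 1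
  · rfl
  · simp only [Function.comp_apply]
    module

theorem HasDerivAt.sqrt_sq_sub_one {r : ℝ → ℝ} {r₁ u : ℝ} (hr : HasDerivAt r r₁ u)
    (hr1 : 1 < r u) :
    HasDerivAt (fun t => √(r t ^ 2 - 1)) (r u * r₁ / √(r u ^ 2 - 1)) u := by
  have hpos : r u ^ 2 - 1 ≠ 0 := by nlinarith
  convert ((hr.fun_pow 2).sub_const 1).sqrt hpos using 1
  field_simp
  ring

theorem hasDerivAt_deriv_of_deriv_sq_eq {f F : ℝ → ℝ} {s : Set ℝ} {u F' : ℝ} (hs : IsOpen s)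
    (hs' : Convex ℝ s) (hf : ∀ t ∈ s, DifferentiableAt ℝ f t) (hf' : ∀ t ∈ s, deriv f t ≠ 0)
    (hF : ∀ t ∈ s, deriv f t ^ 2 = F t) (hu : u ∈ s) (hFu : HasDerivAt F F' u) :
    HasDerivAt (deriv f) (F' / (2 * deriv f u)) u := by
  obtain ⟨ε, hε, hfε⟩ : ∃ ε : ℝ, ε ^ 2 = 1 ∧ ∀ t ∈ s, deriv f t = ε * √(F t) := by
    rcases hasDerivWithinAt_forall_lt_or_forall_gt_of_forall_ne hs'
      (fun t ht => (hf t ht).hasDerivAt.hasDerivWithinAt) hf' with hneg | hpos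
    · refine ⟨-1, by norm_num, fun t ht => ?_⟩
      rw [← hF t ht, Real.sqrt_sq_eq_abs, abs_of_neg (hneg t ht)]
      ring
    · refine ⟨1, by norm_num, fun t ht => ?_⟩
      rw [← hF t ht, Real.sqrt_sq_eq_abs, abs_of_pos (hpos t ht)]
      ring
  have hFu0 : F u ≠ 0 := by rw [← hF u hu]; exact pow_ne_zero 2 (hf' u hu)
  have hsqrt : √(F u) = ε * deriv f u := by
    rw [hfε u hu, ← mul_assoc, ← sq, hε, one_mul]
  refine (((hFu.sqrt hFu0).const_mul ε).congr_of_eventuallyEq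
    (Filter.eventuallyEq_of_mem (hs.mem_nhds hu) hfε)).congr_deriv ?_
  have hε0 : ε ≠ 0 := by rintro rfl; norm_num at hε
  rw [hsqrt]
  field_simp

theorem hasDerivAt_intervalIntegral_of_continuousOn {E : Type*} [NormedAddCommGroup E]
    [NormedSpace ℝ E] [CompleteSpace E] {f : ℝ → E} {s : Set ℝ} {a u : ℝ} (hs : IsOpen s)
    [hs' : s.OrdConnected] (hf : ContinuousOn f s) (ha : a ∈ s) (hu : u ∈ s) :
    HasDerivAt (fun t => ∫ τ in a..t, f τ) (f u) u :=
  intervalIntegral.integral_hasDerivAt_right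
    ((hf.mono (hs'.uIcc_subset ha hu)).intervalIntegrable)
    (hf.stronglyMeasurableAtFilter hs u hu) (hf.continuousAt (hs.mem_nhds hu))

section SemiForm

variable {k m : ℕ}

theorem semiForm_comm (v w : Fin m → ℝ) : semiForm k v w = semiForm k w v :=
  Finset.sum_congr rfl fun _ _ => by ring

theorem semiForm_add_left (v v' w : Fin m → ℝ) :
    semiForm k (v + v') w = semiForm k v w + semiForm k v' w := by
  simp only [semiForm, Pi.add_apply, ← Finset.sum_add_distrib]
  exact Finset.sum_congr rfl fun _ _ => by ring

theorem semiForm_smul_left (a : ℝ) (v w : Fin m → ℝ) :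
    semiForm k (a • v) w = a * semiForm k v w := by
  simp only [semiForm, Pi.smul_apply, smul_eq_mul, Finset.mul_sum]
  exact Finset.sum_congr rfl fun _ _ => by ring

theorem semiForm_add_right (v w w' : Fin m → ℝ) :
    semiForm k v (w + w') = semiForm k v w + semiForm k v w' := by
  rw [semiForm_comm, semiForm_add_left, semiForm_comm w, semiForm_comm w']

theorem semiForm_smul_right (a : ℝ) (v w : Fin m → ℝ) :
    semiForm k v (a • w) = a * semiForm k v w := by
  rw [semiForm_comm, semiForm_smul_left, semiForm_comm]

structure IsSemiOrthonormal (k : ℕ) (e₁ e₂ e₃ : Fin m → ℝ) : Prop where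
  self₁ : semiForm k e₁ e₁ = -1
  self₂ : semiForm k e₂ e₂ = 1
  self₃ : semiForm k e₃ e₃ = 1
  orth₁₂ : semiForm k e₁ e₂ = 0
  orth₁₃ : semiForm k e₁ e₃ = 0
  orth₂₃ : semiForm k e₂ e₃ = 0

theorem IsSemiOrthonormal.semiForm_lincomb {e₁ e₂ e₃ : Fin m → ℝ}
    (he : IsSemiOrthonormal k e₁ e₂ e₃) (a b c a' b' c' : ℝ) :
    semiForm k (a • e₁ + b • e₂ + c • e₃) (a' • e₁ + b' • e₂ + c' • e₃)
      = -(a * a') + b * b' + c * c' := by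
  simp only [semiForm_add_left, semiForm_add_right, semiForm_smul_left, semiForm_smul_right,
    semiForm_comm e₂ e₁, semiForm_comm e₃ e₁, semiForm_comm e₃ e₂, he.self₁, he.self₂, he.self₃,
    he.orth₁₂, he.orth₁₃, he.orth₂₃]
  ring

end SemiForm

section LastTwoCoordinates

variable {n k : ℕ}

def lastTwoVec (n : ℕ) (p q : ℝ) : Fin (n + 2) → ℝ := fun i =>
  if (i : ℕ) = n then p else if (i : ℕ) = n + 1 then q else 0

theorem semiForm_lastTwoVec (hkn : k ≤ n) (p₁ p₂ q₁ q₂ : ℝ) :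
    semiForm k (lastTwoVec n p₁ p₂) (lastTwoVec n q₁ q₂) = p₁ * q₁ + p₂ * q₂ := by
  have hlt (i : Fin n) : (i : ℕ) ≠ n ∧ (i : ℕ) ≠ n + 1 := by omega
  simp [semiForm, lastTwoVec, Fin.sum_univ_castSucc, hlt, not_lt.2 hkn,
    not_lt.2 (hkn.trans n.le_succ)]

theorem semiForm_lastTwoVec_eq_zero {v : Fin (n + 2) → ℝ}
    (hv : ∀ i : Fin (n + 2), ((i : ℕ) = n ∨ (i : ℕ) = n + 1) → v i = 0) (q₁ q₂ : ℝ) :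
    semiForm k v (lastTwoVec n q₁ q₂) = 0 :=
  Finset.sum_eq_zero fun i _ => by
    by_cases h : (i : ℕ) = n ∨ (i : ℕ) = n + 1
    · rw [hv i h]; ring
    · simp only [lastTwoVec, if_neg (not_or.1 h).1, if_neg (not_or.1 h).2, mul_zero]

theorem neg_lastTwoVec (p q : ℝ) : -lastTwoVec n p q = lastTwoVec n (-p) (-q) := by
  ext i
  simp only [Pi.neg_apply, lastTwoVec]
  split_ifs <;> simp

theorem HasDerivAt.lastTwoVec {p q : ℝ → ℝ} {p' q' s : ℝ} (hp : HasDerivAt p p' s)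
    (hq : HasDerivAt q q' s) :
    HasDerivAt (fun s => lastTwoVec n (p s) (q s)) (lastTwoVec n p' q') s := by
  rw [hasDerivAt_pi]
  intro i
  unfold _root_.lastTwoVec
  split_ifs
  · exact hp
  · exact hq
  · exact hasDerivAt_const s 0

noncomputable def frameB₂ (n : ℕ) (s : ℝ) : Fin (n + 2) → ℝ :=
  lastTwoVec n (Real.cos s) (Real.sin s)

noncomputable def frameB₃ (n : ℕ) (s : ℝ) : Fin (n + 2) → ℝ :=
  lastTwoVec n (-Real.sin s) (Real.cos s)

theorem hasDerivAt_frameB₂ (s : ℝ) : HasDerivAt (frameB₂ n) (frameB₃ n s) s :=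
  (Real.hasDerivAt_cos s).lastTwoVec (Real.hasDerivAt_sin s)

theorem hasDerivAt_frameB₃ (s : ℝ) : HasDerivAt (frameB₃ n) (-frameB₂ n s) s := by
  rw [frameB₂, neg_lastTwoVec]
  exact (Real.hasDerivAt_sin s).neg.lastTwoVec (Real.hasDerivAt_cos s)

theorem isSemiOrthonormal_frame (hkn : k ≤ n) {y : Fin (n + 2) → ℝ}
    (hy : ∀ i : Fin (n + 2), ((i : ℕ) = n ∨ (i : ℕ) = n + 1) → y i = 0)
    (hyy : semiForm k y y = -1) (s : ℝ) :
    IsSemiOrthonormal k y (frameB₂ n s) (frameB₃ n s) where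
  self₁ := hyy
  self₂ := by rw [frameB₂, semiForm_lastTwoVec hkn]; linear_combination Real.cos_sq_add_sin_sq s
  self₃ := by rw [frameB₃, semiForm_lastTwoVec hkn]; linear_combination Real.cos_sq_add_sin_sq s
  orth₁₂ := semiForm_lastTwoVec_eq_zero hy _ _
  orth₁₃ := semiForm_lastTwoVec_eq_zero hy _ _
  orth₂₃ := by rw [frameB₂, frameB₃, semiForm_lastTwoVec hkn]; ring

end LastTwoCoordinates

section ProfileCurve

variable {E : Type*} [NormedAddCommGroup E] [NormedSpace ℝ E]

noncomputable def profileCurve (y : E) (B₂ : ℝ → E) (r θ : ℝ → ℝ) (t : ℝ) : E :=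
  r t • y + √(r t ^ 2 - 1) • B₂ (θ t)

noncomputable def profileTangent (y : E) (B₂ B₃ : ℝ → E) (r r' lam θ : ℝ → ℝ) (t : ℝ) : E :=
  r' t • y + (r t * r' t / √(r t ^ 2 - 1)) • B₂ (θ t)
    + (r t * lam t / √(r t ^ 2 - 1)) • B₃ (θ t)

noncomputable def profileNormal (y : E) (B₂ B₃ : ℝ → E) (r r' lam θ : ℝ → ℝ) (t : ℝ) : E :=
  (-(r t * lam t)) • y + (-(r t ^ 2 * lam t / √(r t ^ 2 - 1))) • B₂ (θ t)
    + (r' t / √(r t ^ 2 - 1)) • B₃ (θ t)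

variable {y : E} {B₂ B₃ : ℝ → E} {r r' lam θ : ℝ → ℝ} {u : ℝ}

theorem hasDerivAt_profileCurve (hB₂ : HasDerivAt B₂ (B₃ (θ u)) (θ u))
    (hr : HasDerivAt r (r' u) u) (hθ : HasDerivAt θ (r u * lam u / (r u ^ 2 - 1)) u)
    (hr1 : 1 < r u) :
    HasDerivAt (profileCurve y B₂ r θ) (profileTangent y B₂ B₃ r r' lam θ u) u := by
  have hP := hr.sqrt_sq_sub_one hr1
  have hP0 : 0 < √(r u ^ 2 - 1) := Real.sqrt_pos.2 (by nlinarith)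
  have hPsq : √(r u ^ 2 - 1) ^ 2 = r u ^ 2 - 1 := Real.sq_sqrt (by nlinarith)
  obtain ⟨P, hPdef⟩ : ∃ P, √(r u ^ 2 - 1) = P := ⟨_, rfl⟩
  rw [hPdef] at hP hP0 hPsq
  rw [← hPsq] at hθ
  have hcoef : P * (r u * lam u / P ^ 2) = r u * lam u / P := by field_simp
  refine ((hr.smul_const y).fun_add (hP.smul (hB₂.scomp u hθ))).congr_deriv ?_
  simp only [profileTangent, Function.comp_apply, smul_smul, hPdef, hcoef]
  module

theorem hasDerivAt_profileNormal {κ : ℝ} (hB₂ : HasDerivAt B₂ (B₃ (θ u)) (θ u))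
    (hB₃ : HasDerivAt B₃ (-B₂ (θ u)) (θ u)) (hr : HasDerivAt r (r' u) u)
    (hr' : HasDerivAt r' (r u * (1 - lam u * κ)) u)
    (hlam : HasDerivAt lam ((κ - lam u) * r' u / r u) u)
    (hθ : HasDerivAt θ (r u * lam u / (r u ^ 2 - 1)) u) (hr1 : 1 < r u)
    (hode : r' u ^ 2 = r u ^ 2 - 1 - r u ^ 2 * lam u ^ 2) :
    HasDerivAt (profileNormal y B₂ B₃ r r' lam θ)
      (-κ • profileTangent y B₂ B₃ r r' lam θ u) u := by
  have hP := hr.sqrt_sq_sub_one hr1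
  have hP0 : 0 < √(r u ^ 2 - 1) := Real.sqrt_pos.2 (by nlinarith)
  have hPsq : √(r u ^ 2 - 1) ^ 2 = r u ^ 2 - 1 := Real.sq_sqrt (by nlinarith)
  obtain ⟨P, hPdef⟩ : ∃ P, √(r u ^ 2 - 1) = P := ⟨_, rfl⟩
  rw [hPdef] at hP hP0 hPsq
  rw [← hPsq] at hθ
  have hr0 : r u ≠ 0 := (zero_lt_one.trans hr1).ne'
  have ha : HasDerivAt (fun t => -(r t * lam t)) (-κ * r' u) u :=
    (hr.fun_mul hlam).fun_neg.congr_deriv (by field_simp; ring)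
  have hb : HasDerivAt (fun t => -(r t ^ 2 * lam t / √(r t ^ 2 - 1)))
      (-κ * (r u * r' u / P) + r' u / P * (r u * lam u / P ^ 2)) u := by
    refine (((hr.fun_pow 2).fun_mul hlam).fun_div hP (hPdef ▸ hP0.ne')).fun_neg.congr_deriv ?_
    rw [hPdef]
    field_simp
    linear_combination (-(r' u * r u * lam u)) * hPsq
  have hc : HasDerivAt (fun t => r' t / √(r t ^ 2 - 1))
      (-κ * (r u * lam u / P) - (-(r u ^ 2 * lam u / P)) * (r u * lam u / P ^ 2)) u := by
    refine (hr'.fun_div hP (hPdef ▸ hP0.ne')).congr_deriv ?_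
    rw [hPdef]
    field_simp
    linear_combination hPsq - hode
  refine (hasDerivAt_lincomb_rotatingFrame hB₂ hB₃ ha hb hc hθ).congr_deriv ?_
  simp only [profileTangent, hPdef]
  module

end ProfileCurve

section ProfileForms

variable {k m : ℕ} {y : Fin m → ℝ} {B₂ B₃ : ℝ → Fin m → ℝ} {r r' lam θ : ℝ → ℝ} {u : ℝ}

theorem semiForm_profileCurve_self (hF : IsSemiOrthonormal k y (B₂ (θ u)) (B₃ (θ u)))
    (hr1 : 1 < r u) :
    semiForm k (profileCurve y B₂ r θ u) (profileCurve y B₂ r θ u) = -1 := by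
  have h := hF.semiForm_lincomb (r u) (√(r u ^ 2 - 1)) 0 (r u) (√(r u ^ 2 - 1)) 0
  simp only [zero_smul, add_zero] at h
  rw [profileCurve, h, Real.mul_self_sqrt (by nlinarith)]
  ring

theorem semiForm_profileTangent_self (hF : IsSemiOrthonormal k y (B₂ (θ u)) (B₃ (θ u)))
    (hr1 : 1 < r u) (hode : r' u ^ 2 = r u ^ 2 - 1 - r u ^ 2 * lam u ^ 2) :
    semiForm k (profileTangent y B₂ B₃ r r' lam θ u) (profileTangent y B₂ B₃ r r' lam θ u)
      = 1 := by
  have hPsq : √(r u ^ 2 - 1) ^ 2 = r u ^ 2 - 1 := Real.sq_sqrt (by nlinarith)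
  have hP0 : 0 < √(r u ^ 2 - 1) := Real.sqrt_pos.2 (by nlinarith)
  rw [profileTangent, hF.semiForm_lincomb]
  field_simp
  linear_combination
    (r u ^ 2 - √(r u ^ 2 - 1) ^ 2) * hode + (r u ^ 2 * lam u ^ 2 - r u ^ 2) * hPsq

theorem semiForm_profileNormal_self (hF : IsSemiOrthonormal k y (B₂ (θ u)) (B₃ (θ u)))
    (hr1 : 1 < r u) (hode : r' u ^ 2 = r u ^ 2 - 1 - r u ^ 2 * lam u ^ 2) :
    semiForm k (profileNormal y B₂ B₃ r r' lam θ u) (profileNormal y B₂ B₃ r r' lam θ u)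
      = 1 := by
  have hPsq : √(r u ^ 2 - 1) ^ 2 = r u ^ 2 - 1 := Real.sq_sqrt (by nlinarith)
  have hP0 : 0 < √(r u ^ 2 - 1) := Real.sqrt_pos.2 (by nlinarith)
  rw [profileNormal, hF.semiForm_lincomb]
  field_simp
  linear_combination hode + (-1 - r u ^ 2 * lam u ^ 2) * hPsq

theorem semiForm_profileNormal_profileTangent
    (hF : IsSemiOrthonormal k y (B₂ (θ u)) (B₃ (θ u))) (hr1 : 1 < r u) :
    semiForm k (profileNormal y B₂ B₃ r r' lam θ u) (profileTangent y B₂ B₃ r r' lam θ u)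
      = 0 := by
  have hPsq : √(r u ^ 2 - 1) ^ 2 = r u ^ 2 - 1 := Real.sq_sqrt (by nlinarith)
  have hP0 : 0 < √(r u ^ 2 - 1) := Real.sqrt_pos.2 (by nlinarith)
  rw [profileNormal, profileTangent, hF.semiForm_lincomb]
  field_simp
  linear_combination (r u * lam u * r' u) * hPsq

theorem semiForm_profileNormal_eq_zero {v : Fin m → ℝ} (hvy : semiForm k v y = 0)
    (hv₂ : semiForm k v (B₂ (θ u)) = 0) (hv₃ : semiForm k v (B₃ (θ u)) = 0) :
    semiForm k (profileNormal y B₂ B₃ r r' lam θ u) v = 0 := by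
  rw [profileNormal, semiForm_comm]
  simp only [semiForm_add_right, semiForm_smul_right, hvy, hv₂, hv₃]
  ring

end ProfileForms

section ProfileODE

variable {n : ℕ} {h c : ℝ} {g r lam : ℝ → ℝ} {t : ℝ}

theorem one_lt_of_sqrt_neg_lt (hr : ∀ t, r t = g t / √(-c)) (hc : c < 0)
    (hgc : √(-c) < g t) : 1 < r t := by
  rw [hr, one_lt_div (Real.sqrt_pos.2 (neg_pos.2 hc))]
  exact hgc

theorem hasDerivAt_of_eq_div_const {a : ℝ} (hr : ∀ t, r t = g t / a)
    (hg : DifferentiableAt ℝ g t) : HasDerivAt r (deriv r t) t := by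
  obtain rfl : r = fun t => g t / a := funext hr
  exact (hg.div_const _).hasDerivAt

theorem deriv_sq_of_ode (hr : ∀ t, r t = g t / √(-c))
    (hlam : ∀ t, lam t = h + g t ^ (-(n : ℤ))) (hc : c < 0)
    (hode : deriv g t ^ 2 = c + g t ^ 2 - g t ^ 2 * (h + g t ^ (-(n : ℤ))) ^ 2) :
    deriv r t ^ 2 = r t ^ 2 - 1 - r t ^ 2 * lam t ^ 2 := by
  have hsq : √(-c) ^ 2 = -c := Real.sq_sqrt (by linarith)
  obtain rfl : r = fun t => g t / √(-c) := funext hr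
  rw [deriv_div_const, ← hlam] at *
  simp only [div_pow, hsq]
  field_simp [hc.ne]
  linear_combination -hode

theorem hasDerivAt_lam (hr : ∀ t, r t = g t / √(-c))
    (hlam : ∀ t, lam t = h + g t ^ (-(n : ℤ))) (hc : c < 0) (hg : DifferentiableAt ℝ g t)
    (hg0 : g t ≠ 0) :
    HasDerivAt lam ((n * h - (n - 1) * lam t - lam t) * deriv r t / r t) t := by
  obtain rfl : r = fun t => g t / √(-c) := funext hr
  obtain rfl : lam = fun t => h + g t ^ (-(n : ℤ)) := funext hlam
  have hsqrt : √(-c) ≠ 0 := (Real.sqrt_pos.2 (neg_pos.2 hc)).ne'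
  refine (((hasDerivAt_zpow (-(n : ℤ)) (g t) (.inl hg0)).comp t hg.hasDerivAt).const_add
    h).congr_deriv ?_
  rw [deriv_div_const, zpow_sub_one₀ hg0]
  field_simp
  push_cast
  ring

theorem hasDerivAt_deriv_of_ode {s : Set ℝ} {u : ℝ} (hs : IsOpen s) (hs' : Convex ℝ s)
    (hr : ∀ t, r t = g t / √(-c)) (hlam : ∀ t, lam t = h + g t ^ (-(n : ℤ))) (hc : c < 0)
    (hgdiff : ∀ t ∈ s, DifferentiableAt ℝ g t) (hgc : ∀ t ∈ s, √(-c) < g t)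
    (hg' : ∀ t ∈ s, deriv g t ≠ 0)
    (hode : ∀ t ∈ s, deriv g t ^ 2 = c + g t ^ 2 - g t ^ 2 * (h + g t ^ (-(n : ℤ))) ^ 2)
    (hu : u ∈ s) :
    HasDerivAt (deriv r) (r u * (1 - lam u * (n * h - (n - 1) * lam u))) u := by
  have hsqrt : 0 < √(-c) := Real.sqrt_pos.2 (neg_pos.2 hc)
  have hr0 : r u ≠ 0 := (zero_lt_one.trans (one_lt_of_sqrt_neg_lt hr hc (hgc u hu))).ne'
  have hrd (t : ℝ) (ht : t ∈ s) : HasDerivAt r (deriv r t) t :=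
    hasDerivAt_of_eq_div_const hr (hgdiff t ht)
  have hr'0 (t : ℝ) (ht : t ∈ s) : deriv r t ≠ 0 := by
    rw [funext hr, deriv_div_const]
    exact div_ne_zero (hg' t ht) hsqrt.ne'
  have hlam' := hasDerivAt_lam hr hlam hc (hgdiff u hu) (hsqrt.trans (hgc u hu)).ne'
  refine (hasDerivAt_deriv_of_deriv_sq_eq hs hs' (fun t ht => (hrd t ht).differentiableAt) hr'0
    (fun t ht => deriv_sq_of_ode hr hlam hc (hode t ht)) hu
    ((((hrd u hu).fun_pow 2).sub_const 1).fun_sub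
      (((hrd u hu).fun_pow 2).fun_mul (hlam'.fun_pow 2)))).congr_deriv ?_
  field_simp [hr'0 u hu]
  ring

end ProfileODE

/-- Coordinates `n+1` and `n+2` of the paper (1-indexed) are indices `n` and `n+1` here. -/
theorem stmt_6_general (n k : ℕ) (hkn : k ≤ n)
    (h c a₁ a₂ t₀ : ℝ) (hc : c < 0) (ht₀ : t₀ ∈ Set.Ioo a₁ a₂)
    (g lam r θ : ℝ → ℝ)
    (hgdiff : ∀ t ∈ Set.Ioo a₁ a₂, DifferentiableAt ℝ g t)
    (hgc : ∀ t ∈ Set.Ioo a₁ a₂, Real.sqrt (-c) < g t)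
    (hg' : ∀ t ∈ Set.Ioo a₁ a₂, deriv g t ≠ 0)
    (hode : ∀ t ∈ Set.Ioo a₁ a₂,
      deriv g t ^ 2 = c + g t ^ 2 - g t ^ 2 * (h + g t ^ (-(n : ℤ))) ^ 2)
    (hlam : ∀ t, lam t = h + g t ^ (-(n : ℤ)))
    (hr : ∀ t, r t = g t / Real.sqrt (-c))
    (hθ : ∀ t, θ t = ∫ τ in t₀..t, r τ * lam τ / (r τ ^ 2 - 1))
    (B₂ B₃ : ℝ → Fin (n + 2) → ℝ)
    (hB₂ : ∀ s i, B₂ s i =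
      if (i : ℕ) = n then Real.cos s else if (i : ℕ) = n + 1 then Real.sin s else 0)
    (hB₃ : ∀ s i, B₃ s i =
      if (i : ℕ) = n then -Real.sin s else if (i : ℕ) = n + 1 then Real.cos s else 0) :
    (∀ t ∈ Set.Ioo a₁ a₂, deriv r t ^ 2 + r t ^ 2 * lam t ^ 2 = r t ^ 2 - 1) ∧
    ∀ y : Fin (n + 2) → ℝ,
      (∀ i : Fin (n + 2), ((i : ℕ) = n ∨ (i : ℕ) = n + 1) → y i = 0) →
      semiForm k y y = -1 →
      ∀ φ ν : ℝ → Fin (n + 2) → ℝ,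
        (∀ u, φ u = r u • y + Real.sqrt (r u ^ 2 - 1) • B₂ (θ u)) →
        (∀ u, ν u = (-(r u * lam u)) • y
            - (r u ^ 2 * lam u / Real.sqrt (r u ^ 2 - 1)) • B₂ (θ u)
            + (deriv r u / Real.sqrt (r u ^ 2 - 1)) • B₃ (θ u)) →
        ∀ u ∈ Set.Ioo a₁ a₂,
          semiForm k (φ u) (φ u) = -1 ∧
          semiForm k (deriv φ u) (deriv φ u) = 1 ∧
          semiForm k (ν u) (ν u) = 1 ∧
          semiForm k (ν u) (deriv φ u) = 0 ∧
          (∀ v : Fin (n + 2) → ℝ,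
            (∀ i : Fin (n + 2), ((i : ℕ) = n ∨ (i : ℕ) = n + 1) → v i = 0) →
            semiForm k v y = 0 → semiForm k (ν u) v = 0) ∧
          deriv ν u = (-((n : ℝ) * h - ((n : ℝ) - 1) * lam u)) • deriv φ u := by
  have hr1 (t) (ht : t ∈ Set.Ioo a₁ a₂) : 1 < r t := one_lt_of_sqrt_neg_lt hr hc (hgc t ht)
  have hrd (t) (ht : t ∈ Set.Ioo a₁ a₂) : HasDerivAt r (deriv r t) t :=
    hasDerivAt_of_eq_div_const hr (hgdiff t ht)
  have hr'sq (t) (ht : t ∈ Set.Ioo a₁ a₂) := deriv_sq_of_ode hr hlam hc (hode t ht)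
  have hlamd (t) (ht : t ∈ Set.Ioo a₁ a₂) := hasDerivAt_lam hr hlam hc (hgdiff t ht)
    ((Real.sqrt_nonneg _).trans_lt (hgc t ht)).ne'
  have hθd (u) (hu : u ∈ Set.Ioo a₁ a₂) : HasDerivAt θ (r u * lam u / (r u ^ 2 - 1)) u := by
    rw [funext hθ]
    refine hasDerivAt_intervalIntegral_of_continuousOn isOpen_Ioo (fun t ht => ?_) ht₀ hu
    exact (((hrd t ht).fun_mul (hlamd t ht)).fun_div (((hrd t ht).fun_pow 2).sub_const 1)
      (by nlinarith [hr1 t ht])).continuousAt.continuousWithinAt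
  refine ⟨fun t ht => by linarith [hr'sq t ht], fun y hy hyy φ ν hφ hν u hu => ?_⟩
  obtain rfl : φ = profileCurve y B₂ r θ := funext hφ
  obtain rfl : ν = profileNormal y B₂ B₃ r (deriv r) lam θ :=
    funext fun t => by rw [hν, profileNormal, sub_eq_add_neg, ← neg_smul]
  obtain rfl : B₂ = frameB₂ n := funext fun s => funext (hB₂ s)
  obtain rfl : B₃ = frameB₃ n := funext fun s => funext (hB₃ s)
  have hF := isSemiOrthonormal_frame hkn hy hyy (θ u)
  rw [(hasDerivAt_profileCurve (hasDerivAt_frameB₂ _) (hrd u hu) (hθd u hu) (hr1 u hu)).deriv,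
    (hasDerivAt_profileNormal (hasDerivAt_frameB₂ _) (hasDerivAt_frameB₃ _) (hrd u hu)
      (hasDerivAt_deriv_of_ode isOpen_Ioo (convex_Ioo a₁ a₂) hr hlam hc hgdiff hgc hg' hode hu)
      (hlamd u hu) (hθd u hu) (hr1 u hu) (hr'sq u hu)).deriv]
  exact ⟨semiForm_profileCurve_self hF (hr1 u hu),
    semiForm_profileTangent_self hF (hr1 u hu) (hr'sq u hu),
    semiForm_profileNormal_self hF (hr1 u hu) (hr'sq u hu),
    semiForm_profileNormal_profileTangent hF (hr1 u hu),
    fun v hv hvy => semiForm_profileNormal_eq_zero hvy (semiForm_lastTwoVec_eq_zero hv _ _)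
      (semiForm_lastTwoVec_eq_zero hv _ _), rfl⟩

/-- Theorem 2.15 of the paper (a family of cmc hypersurfaces of `ℍ_{k-1}^{n+1}`).
Coordinates `n+1` and `n+2` of the paper (1-indexed) are indices `n` and `n+1` here. -/
theorem stmt_6 (n k : ℕ) (hn : 2 ≤ n) (hk1 : 1 ≤ k) (hkn : k ≤ n)
    (h c a₁ a₂ t₀ : ℝ) (hc : c < 0) (ht₀ : t₀ ∈ Set.Ioo a₁ a₂)
    (g lam r θ : ℝ → ℝ)
    (hgdiff : ∀ t ∈ Set.Ioo a₁ a₂, DifferentiableAt ℝ g t)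
    (hgc : ∀ t ∈ Set.Ioo a₁ a₂, Real.sqrt (-c) < g t)
    (hg' : ∀ t ∈ Set.Ioo a₁ a₂, deriv g t ≠ 0)
    (hode : ∀ t ∈ Set.Ioo a₁ a₂,
      deriv g t ^ 2 = c + g t ^ 2 - g t ^ 2 * (h + g t ^ (-(n : ℤ))) ^ 2)
    (hlam : ∀ t, lam t = h + g t ^ (-(n : ℤ)))
    (hr : ∀ t, r t = g t / Real.sqrt (-c))
    (hθ : ∀ t, θ t = ∫ τ in t₀..t, r τ * lam τ / (r τ ^ 2 - 1))
    (B₂ B₃ : ℝ → Fin (n + 2) → ℝ)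
    (hB₂ : ∀ s i, B₂ s i =
      if (i : ℕ) = n then Real.cos s else if (i : ℕ) = n + 1 then Real.sin s else 0)
    (hB₃ : ∀ s i, B₃ s i =
      if (i : ℕ) = n then -Real.sin s else if (i : ℕ) = n + 1 then Real.cos s else 0) :
    (∀ t ∈ Set.Ioo a₁ a₂, deriv r t ^ 2 + r t ^ 2 * lam t ^ 2 = r t ^ 2 - 1) ∧
    ∀ y : Fin (n + 2) → ℝ,
      (∀ i : Fin (n + 2), ((i : ℕ) = n ∨ (i : ℕ) = n + 1) → y i = 0) →
      semiForm k y y = -1 →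
      ∀ φ ν : ℝ → Fin (n + 2) → ℝ,
        (∀ u, φ u = r u • y + Real.sqrt (r u ^ 2 - 1) • B₂ (θ u)) →
        (∀ u, ν u = (-(r u * lam u)) • y
            - (r u ^ 2 * lam u / Real.sqrt (r u ^ 2 - 1)) • B₂ (θ u)
            + (deriv r u / Real.sqrt (r u ^ 2 - 1)) • B₃ (θ u)) →
        ∀ u ∈ Set.Ioo a₁ a₂,
          semiForm k (φ u) (φ u) = -1 ∧
          semiForm k (deriv φ u) (deriv φ u) = 1 ∧
          semiForm k (ν u) (ν u) = 1 ∧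
          semiForm k (ν u) (deriv φ u) = 0 ∧
          (∀ v : Fin (n + 2) → ℝ,
            (∀ i : Fin (n + 2), ((i : ℕ) = n ∨ (i : ℕ) = n + 1) → v i = 0) →
            semiForm k v y = 0 → semiForm k (ν u) v = 0) ∧
          deriv ν u = (-((n : ℝ) * h - ((n : ℝ) - 1) * lam u)) • deriv φ u :=
  stmt_6_general n k hkn h c a₁ a₂ t₀ hc ht₀ g lam r θ hgdiff hgc hg' hode hlam hr hθ B₂ B₃ hB₂ hB₃
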